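/- Let L be a real symmetric n×n matrix with L·𝟙 = 0 (𝟙 the all-ones vector), and suppose there exists λ > 0 such that xᵀLx ≥ λ‖x‖² for every x ∈ ℝⁿ with ⟨x, 𝟙⟩ = 0. Then for every x₀ ∈ ℝⁿ, exp(−t·L)·x₀ converges as t → +∞ to x̄ = ((Σᵢ x₀ᵢ)/n)·𝟙, the uniform (steady-state) vector with each coordinate equal to the mean of x₀. -/

import Mathlib

open Matrix Filter

attribute [local instance] Matrix.linftyOpNormedAddCommGroup Matrix.linftyOpNormedRing
  Matrix.linftyOpNormedAlgebra

/-- The linear map `M ↦ M *ᵥ v`. -/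
noncomputable def mvL (n : ℕ) (v : Fin n → ℝ) :
    Matrix (Fin n) (Fin n) ℝ →ₗ[ℝ] (Fin n → ℝ) where
  toFun M := M *ᵥ v
  map_add' A B := Matrix.add_mulVec A B v
  map_smul' c A := Matrix.smul_mulVec c A v

noncomputable def mvCLM (n : ℕ) (v : Fin n → ℝ) :
    Matrix (Fin n) (Fin n) ℝ →L[ℝ] (Fin n → ℝ) :=
  LinearMap.toContinuousLinearMap (mvL n v)

lemma exp_mulVec_fixed {n : ℕ} (M : Matrix (Fin n) (Fin n) ℝ) (v : Fin n → ℝ)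
    (h : M *ᵥ v = 0) : (NormedSpace.exp M) *ᵥ v = v := by
  have hpow : ∀ k : ℕ, M ^ (k + 1) *ᵥ v = 0 := by
    intro k
    rw [pow_succ, ← Matrix.mulVec_mulVec, h, Matrix.mulVec_zero]
  have hsum : Summable fun k : ℕ => ((k.factorial : ℝ)⁻¹) • M ^ k :=
    NormedSpace.expSeries_summable' (𝕂 := ℝ) M
  have : (NormedSpace.exp M) *ᵥ v = mvCLM n v (NormedSpace.exp M) := rfl
  rw [this, NormedSpace.exp_eq_tsum (𝕂 := ℝ), (mvCLM n v).map_tsum hsum]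
  have hterm : ∀ k : ℕ, mvCLM n v (((k.factorial : ℝ)⁻¹) • M ^ k)
      = if k = 0 then v else 0 := by
    intro k
    cases k with
    | zero => simp [mvCLM, mvL, Matrix.one_mulVec]
    | succ k =>
      simp [mvCLM, mvL, Matrix.smul_mulVec, hpow k]
  calc (∑' k : ℕ, mvCLM n v (((k.factorial : ℝ)⁻¹) • M ^ k))
      = ∑' k : ℕ, (if k = 0 then v else 0) := by
        exact tsum_congr hterm
    _ = v := by
        rw [tsum_eq_single 0 (by intro b hb; simp [hb])]; simp

/-- **Convergence to the uniform steady state.** Let `L` be real symmetric with `L·𝟙 = 0`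
and spectral gap `λ > 0` on the orthogonal complement of `𝟙` (i.e. `xᵀLx ≥ λ‖x‖²` whenever
`⟨x, 𝟙⟩ = 0`). Then for every `x₀ ∈ ℝⁿ`, `exp(-t·L)·x₀` converges as `t → +∞` to the
uniform vector `x̄ = ((Σᵢ x₀ᵢ)/n)·𝟙` whose coordinates equal the mean of `x₀`. -/
theorem diffusion_converges_to_mean (n : ℕ) (L : Matrix (Fin n) (Fin n) ℝ)
    (hsymm : L.IsSymm) (hone : L *ᵥ (fun _ => (1 : ℝ)) = 0)
    (lam : ℝ) (hlam : 0 < lam)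
    (hgap : ∀ x : Fin n → ℝ, x ⬝ᵥ (fun _ => (1 : ℝ)) = 0 →
      lam * (x ⬝ᵥ x) ≤ x ⬝ᵥ (L *ᵥ x)) :
    ∀ x₀ : Fin n → ℝ,
      Tendsto (fun t : ℝ => (NormedSpace.exp (-t • L)) *ᵥ x₀) atTop
        (nhds (((∑ i, x₀ i) / n) • (fun _ => (1 : ℝ)))) := by
  intro x₀
  rcases Nat.eq_zero_or_pos n with hn | hn
  · subst hn
    have : (fun t : ℝ => (NormedSpace.exp (-t • L)) *ᵥ x₀)
        = fun _ : ℝ => ((∑ i, x₀ i) / (0:ℕ)) • (fun _ : Fin 0 => (1:ℝ)) :=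
      funext fun t => funext fun i => i.elim0
    rw [this]; exact tendsto_const_nhds
  have hny : (n:ℝ) ≠ 0 := Nat.cast_ne_zero.2 hn.ne'
  set one : Fin n → ℝ := fun _ => (1:ℝ) with hone_def
  set m : ℝ := (∑ i, x₀ i) / n with hm
  set y : Fin n → ℝ := x₀ - m • one with hy
  -- basic symmetry fact
  have hLsym : ∀ z w : Fin n → ℝ, z ⬝ᵥ (L *ᵥ w) = (L *ᵥ z) ⬝ᵥ w := by
    intro z w
    rw [Matrix.dotProduct_mulVec, ← Matrix.mulVec_transpose, hsymm.eq]
  have hy_one : y ⬝ᵥ one = 0 := by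
    have h1 : x₀ ⬝ᵥ one = ∑ i, x₀ i := by simp [dotProduct, hone_def]
    have h2 : (m • one) ⬝ᵥ one = m * n := by
      simp [dotProduct, hone_def, smul_dotProduct]
      ring
    rw [hy, sub_dotProduct, h1, h2, hm]
    field_simp
    ring
  -- the evolving vector
  set u : ℝ → (Fin n → ℝ) := fun t => (NormedSpace.exp (-t • L)) *ᵥ y with hu
  have hsm : ∀ s : ℝ, s • (-L) = -s • L := by
    intro s; rw [smul_neg, neg_smul]
  have hderiv : ∀ t : ℝ, HasDerivAt u (-(L *ᵥ u t)) t := by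
    intro t
    have h1 := hasDerivAt_exp_smul_const' (𝕂 := ℝ) (-L) t
    have h2 := ((mvCLM n y).hasFDerivAt.comp_hasDerivAt t h1)
    have he : (fun s : ℝ => mvCLM n y (NormedSpace.exp (s • (-L)))) = u := by
      funext s; rw [hsm s]; rfl
    have hv : mvCLM n y ((-L) * NormedSpace.exp (t • (-L))) = -(L *ᵥ u t) := by
      show ((-L) * NormedSpace.exp (t • (-L))) *ᵥ y = -(L *ᵥ u t)
      rw [← Matrix.mulVec_mulVec, Matrix.neg_mulVec, hsm t]
    have h2' : HasDerivAt (fun s : ℝ => mvCLM n y (NormedSpace.exp (s • (-L))))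
        ((mvCLM n y) (-L * NormedSpace.exp (t • (-L)))) t := h2
    rw [he, hv] at h2'
    exact h2'
  have hderiv_i : ∀ t : ℝ, ∀ i, HasDerivAt (fun s => u s i) ((-(L *ᵥ u t)) i) t := by
    intro t i
    exact (hasDerivAt_pi.1 (hderiv t)) i
  -- orthogonality is preserved
  have hu0 : u 0 = y := by
    have : (-(0:ℝ)) • L = 0 := by simp
    simp only [hu, this, NormedSpace.exp_zero, Matrix.one_mulVec]
  have hc_deriv : ∀ t : ℝ, HasDerivAt (fun s => u s ⬝ᵥ one) 0 t := by
    intro t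
    have h1 : HasDerivAt (fun s => ∑ i, u s i * one i)
        (∑ i, (-(L *ᵥ u t)) i * one i) t := by
      apply HasDerivAt.fun_sum
      intro i _
      simpa using (hderiv_i t i).mul_const (one i)
    have h2 : (∑ i, (-(L *ᵥ u t)) i * one i) = 0 := by
      have : (∑ i, (-(L *ᵥ u t)) i * one i) = (-(L *ᵥ u t)) ⬝ᵥ one := rfl
      rw [this, neg_dotProduct, ← hLsym, hone, dotProduct_zero, neg_zero]
    rw [← h2]
    exact h1
  have hc : ∀ t : ℝ, u t ⬝ᵥ one = 0 := by
    have hconst : ∀ t : ℝ, (fun s => u s ⬝ᵥ one) t = (fun s => u s ⬝ᵥ one) 0 :=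
      fun t => is_const_of_deriv_eq_zero
        (fun s => (hc_deriv s).differentiableAt)
        (fun s => (hc_deriv s).deriv) t 0
    intro t
    have := hconst t
    simp only at this
    rw [this, hu0, hy_one]
  -- the energy function
  set φ : ℝ → ℝ := fun t => u t ⬝ᵥ u t with hφdef
  have hφ_deriv : ∀ t : ℝ, HasDerivAt φ (-2 * (u t ⬝ᵥ (L *ᵥ u t))) t := by
    intro t
    have h1 : HasDerivAt (fun s => ∑ i, u s i * u s i)
        (∑ i, ((-(L *ᵥ u t)) i * u t i + u t i * (-(L *ᵥ u t)) i)) t := by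
      apply HasDerivAt.fun_sum
      intro i _
      exact (hderiv_i t i).mul (hderiv_i t i)
    have heq : (fun s => ∑ i, u s i * u s i) = φ := by
      funext s; simp [hφdef, dotProduct]
    have hval : (∑ i, ((-(L *ᵥ u t)) i * u t i + u t i * (-(L *ᵥ u t)) i))
        = -2 * (u t ⬝ᵥ (L *ᵥ u t)) := by
      have : (∑ i, ((-(L *ᵥ u t)) i * u t i + u t i * (-(L *ᵥ u t)) i))
          = (-(L *ᵥ u t)) ⬝ᵥ u t + u t ⬝ᵥ (-(L *ᵥ u t)) := by
        simp [dotProduct, Finset.sum_add_distrib]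
      rw [this, neg_dotProduct, dotProduct_neg, ← hLsym]
      ring
    rw [← heq, ← hval]
    exact h1
  have hφ_nonneg : ∀ t : ℝ, 0 ≤ φ t := by
    intro t
    exact Finset.sum_nonneg fun i _ => mul_self_nonneg (u t i)
  -- the Lyapunov function
  set g : ℝ → ℝ := fun t => Real.exp (2 * lam * t) * φ t with hgdef
  have hg_deriv : ∀ t : ℝ, HasDerivAt g
      (Real.exp (2 * lam * t) * (2 * lam) * φ t
        + Real.exp (2 * lam * t) * (-2 * (u t ⬝ᵥ (L *ᵥ u t)))) t := by
    intro t
    have h1 : HasDerivAt (fun s : ℝ => Real.exp (2 * lam * s))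
        (Real.exp (2 * lam * t) * (2 * lam)) t := by
      have := ((hasDerivAt_id t).const_mul (2 * lam)).exp
      simpa [mul_comm] using this
    exact h1.mul (hφ_deriv t)
  have hg_anti : Antitone g := by
    apply antitone_of_deriv_nonpos
    · exact fun t => (hg_deriv t).differentiableAt
    · intro t
      rw [(hg_deriv t).deriv]
      have hgap' := hgap (u t) (hc t)
      have hexp : (0:ℝ) < Real.exp (2 * lam * t) := Real.exp_pos _
      nlinarith [hφ_nonneg t]
  have hφ_bound : ∀ t : ℝ, 0 ≤ t → φ t ≤ Real.exp (-(2 * lam * t)) * φ 0 := by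
    intro t ht
    have h1 : g t ≤ g 0 := hg_anti ht
    have h2 : g 0 = φ 0 := by simp [hgdef]
    have h3 : φ t = Real.exp (-(2 * lam * t)) * g t := by
      rw [hgdef]
      simp only []
      rw [← mul_assoc, ← Real.exp_add]
      simp
    rw [h3]
    have := Real.exp_pos (-(2 * lam * t))
    nlinarith [h1, h2.symm ▸ h1]
  -- φ tends to zero
  have hφ_tendsto : Tendsto φ atTop (nhds 0) := by
    have hub : Tendsto (fun t : ℝ => Real.exp (-(2 * lam * t)) * φ 0) atTop (nhds 0) := by
      have h1 : Tendsto (fun t : ℝ => -(2 * lam * t)) atTop atBot := by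
        apply tendsto_neg_atTop_atBot.comp
        exact Tendsto.const_mul_atTop (by positivity) tendsto_id
      have h2 : Tendsto (fun t : ℝ => Real.exp (-(2 * lam * t))) atTop (nhds 0) :=
        Real.tendsto_exp_atBot.comp h1
      simpa using h2.mul_const (φ 0)
    apply tendsto_of_tendsto_of_tendsto_of_le_of_le' tendsto_const_nhds hub
    · exact Eventually.of_forall hφ_nonneg
    · filter_upwards [eventually_ge_atTop (0:ℝ)] with t ht
      exact hφ_bound t ht
  -- coordinates of u tend to zero
  have hsqrt : Tendsto (fun t => Real.sqrt (φ t)) atTop (nhds 0) := by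
    have := (Real.continuous_sqrt.tendsto 0).comp hφ_tendsto
    simpa [Function.comp_def] using this
  have hui : ∀ i, Tendsto (fun t => u t i) atTop (nhds 0) := by
    intro i
    apply squeeze_zero_norm _ hsqrt
    intro t
    rw [Real.norm_eq_abs, ← Real.sqrt_sq_eq_abs]
    apply Real.sqrt_le_sqrt
    have h2 : (u t i) ^ 2 = u t i * u t i := sq (u t i)
    rw [h2]
    exact Finset.single_le_sum (f := fun j => u t j * u t j)
      (fun j _ => mul_self_nonneg (u t j)) (Finset.mem_univ i)
  -- assemble
  have hdecomp : ∀ t : ℝ, (NormedSpace.exp (-t • L)) *ᵥ x₀ = m • one + u t := by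
    intro t
    have hx : x₀ = m • one + y := by rw [hy]; abel
    calc (NormedSpace.exp (-t • L)) *ᵥ x₀
        = (NormedSpace.exp (-t • L)) *ᵥ (m • one + y) := by rw [← hx]
      _ = m • ((NormedSpace.exp (-t • L)) *ᵥ one) + u t := by
          rw [Matrix.mulVec_add, Matrix.mulVec_smul]
      _ = m • one + u t := by
          rw [exp_mulVec_fixed]
          rw [Matrix.smul_mulVec, hone, smul_zero]
  have hfinal : Tendsto (fun t : ℝ => m • one + u t) atTop (nhds (m • one + 0)) := by
    apply Tendsto.const_add
    rw [tendsto_pi_nhds]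
    intro i
    simpa using hui i
  simp only [add_zero] at hfinal
  have : (fun t : ℝ => (NormedSpace.exp (-t • L)) *ᵥ x₀)
      = fun t : ℝ => m • one + u t := funext hdecomp
  rw [this]
  exact hfinal
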